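/- The equilateral triangle Δ_β of height β = cos(π/12) is a convex G₄-covering of all closed curves of length 2: for every continuous γ : [0,1] → ℂ with γ(0) = γ(1) and arc length (total variation on [0,1]) equal to 2 there exist j ∈ {0,1,2,3} and v ∈ ℂ such that {i^j·γ(t) + v : t ∈ [0,1]} ⊆ Δ_β. -/

import Mathlib

/-!
The width of a closed curve in a direction `u` is at most half of its variation in that
direction. With `ω = e^{iπ/6}` and the estimate `∑_{m<6} |⟪ωᵐ, z⟫| ≤ 4β‖z‖`, the support values
of a closed curve of length 2 in the twelve directions `ωᵐ` therefore add up to at most `4β`.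
These directions split into the four triples of outward normals of the rotated triangles
`i⁻ʲ Δβ`, so for some `j` the three support values of the curve in those normals add up to at
most `β`, the height of `Δβ`, and then a translate of `iʲ γ` lies in `Δβ`.
-/

open Set MeasureTheory

/-- A closed curve of length 2: continuous on `[0,1]`, closed, with total variation 2. -/
def IsClosedCurve2 (γ : ℝ → ℂ) : Prop :=
  ContinuousOn γ (Set.Icc 0 1) ∧ γ 0 = γ 1 ∧ eVariationOn γ (Set.Icc 0 1) = 2

/-- β = cos(π/12), the height of the triangle Δ_β. -/
noncomputable def β : ℝ := Real.cos (Real.pi / 12)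

/-- The equilateral triangle of height β with vertices −β/√3, β/√3, βi. -/
noncomputable def Δβ : Set ℂ :=
  convexHull ℝ {((-(β / Real.sqrt 3) : ℝ) : ℂ), ((β / Real.sqrt 3 : ℝ) : ℂ),
    (β : ℂ) * Complex.I}

open scoped RealInnerProductSpace NNReal

theorem Finset.exists_monotone_enumeration {α : Type*} [LinearOrder α] (s : Finset α)
    (hs : s.Nonempty) :
    ∃ u : ℕ → α, Monotone u ∧ (∀ k, u k ∈ s) ∧ ∀ x ∈ s, ∃ k < s.card, u k = x := by
  have hcard : 0 < s.card := s.card_pos.2 hs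
  refine ⟨fun k ↦ s.orderEmbOfFin rfl ⟨min k (s.card - 1), by omega⟩,
    fun a b hab ↦ (s.orderEmbOfFin rfl).monotone (by simp only [Fin.mk_le_mk]; omega),
    fun k ↦ s.orderEmbOfFin_mem rfl _, fun x hx ↦ ?_⟩
  obtain ⟨i, rfl⟩ : x ∈ Set.range (s.orderEmbOfFin rfl) := by simpa using hx
  refine ⟨i, i.isLt, congrArg _ (Fin.ext ?_)⟩
  simp only
  omega

theorem two_mul_dist_le_sum_dist_of_closed {E : Type*} [PseudoMetricSpace E] (g : ℕ → E) {N p q : ℕ}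
    (hg : g 0 = g N) (hp : p ≤ N) (hq : q ≤ N) :
    2 * dist (g p) (g q) ≤ ∑ k ∈ Finset.range N, dist (g k) (g (k + 1)) := by
  wlog hpq : p ≤ q generalizing p q
  · rw [dist_comm]; exact this hq hp (by omega)
  have before := dist_le_Ico_sum_dist g (Nat.zero_le p)
  have between := dist_le_Ico_sum_dist g hpq
  have after := dist_le_Ico_sum_dist g hq
  rw [hg] at before
  rw [Finset.range_eq_Ico, ← Finset.sum_Ico_consecutive _ (Nat.zero_le q) hq,
    ← Finset.sum_Ico_consecutive _ (Nat.zero_le p) hpq]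
  linarith [dist_triangle (g q) (g N) (g p), dist_comm (g q) (g N), dist_comm (g p) (g q)]

theorem sum_dist_le_of_eVariationOn_le {E : Type*} [PseudoMetricSpace E] {f : ℝ → E} {s : Set ℝ}
    {L : ℝ≥0} (hL : eVariationOn f s ≤ L) {u : ℕ → ℝ} (hu : Monotone u) (us : ∀ k, u k ∈ s)
    (N : ℕ) : ∑ k ∈ Finset.range N, dist (f (u k)) (f (u (k + 1))) ≤ L := by
  have h := (eVariationOn.sum_le (f := f) (n := N) hu us).trans hL
  simp_rw [edist_dist, dist_comm (f (u (_ + 1)))] at h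
  rwa [← ENNReal.ofReal_sum_of_nonneg (fun _ _ ↦ dist_nonneg), ENNReal.ofReal_le_iff_le_toReal
    ENNReal.coe_ne_top, ENNReal.coe_toReal] at h

theorem two_mul_sum_inner_sub_le_of_eVariationOn_le {E ι : Type*} [NormedAddCommGroup E]
    [InnerProductSpace ℝ E] {γ : ℝ → E} {a b : ℝ} (hab : a ≤ b) (hγ : γ a = γ b) {L : ℝ≥0}
    (hL : eVariationOn γ (Icc a b) ≤ L) (s : Finset ι) (d : ι → E) {C : ℝ} (hC0 : 0 ≤ C)
    (hC : ∀ z, ∑ i ∈ s, |⟪d i, z⟫| ≤ C * ‖z‖) {p q : ι → ℝ}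
    (hp : ∀ i ∈ s, p i ∈ Icc a b) (hq : ∀ i ∈ s, q i ∈ Icc a b) :
    2 * ∑ i ∈ s, ⟪d i, γ (p i) - γ (q i)⟫ ≤ C * L := by
  classical
  set P : Finset ℝ := insert a (insert b (s.image p ∪ s.image q))
  obtain ⟨u, hu, huP, hPu⟩ := P.exists_monotone_enumeration (Finset.insert_nonempty _ _)
  set N := P.card - 1
  have hP : ∀ x ∈ P, x ∈ Icc a b := by
    simp only [P, Finset.mem_insert, Finset.mem_union, Finset.mem_image]
    rintro x (rfl | rfl | ⟨i, hi, rfl⟩ | ⟨i, hi, rfl⟩)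
    exacts [⟨le_rfl, hab⟩, ⟨hab, le_rfl⟩, hp i hi, hq i hi]
  have hus : ∀ k, u k ∈ Icc a b := fun k ↦ hP _ (huP k)
  have enum : ∀ x ∈ P, ∃ k ≤ N, u k = x := fun x hx ↦
    (hPu x hx).imp fun k hk ↦ ⟨by omega, hk.2⟩
  have hu0 : u 0 = a := by
    obtain ⟨k, -, hk⟩ := enum a (by simp [P])
    exact le_antisymm (hk ▸ hu (Nat.zero_le k)) (hus 0).1
  have huN : u N = b := by
    obtain ⟨k, hkN, hk⟩ := enum b (by simp [P])
    exact le_antisymm (hus N).2 (hk ▸ hu hkN)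
  have width : ∀ i ∈ s, 2 * ⟪d i, γ (p i) - γ (q i)⟫ ≤
      ∑ k ∈ Finset.range N, |⟪d i, γ (u k) - γ (u (k + 1))⟫| := by
    intro i hi
    obtain ⟨k, hkN, hk⟩ := enum (p i) <| Finset.mem_insert_of_mem <| Finset.mem_insert_of_mem <|
      Finset.mem_union_left _ (Finset.mem_image_of_mem p hi)
    obtain ⟨l, hlN, hl⟩ := enum (q i) <| Finset.mem_insert_of_mem <| Finset.mem_insert_of_mem <|
      Finset.mem_union_right _ (Finset.mem_image_of_mem q hi)
    have h := two_mul_dist_le_sum_dist_of_closed (fun k ↦ ⟪d i, γ (u k)⟫)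
      (by simp only [hu0, huN, hγ]) hkN hlN
    simp only [Real.dist_eq, ← inner_sub_right, hk, hl] at h
    linarith [le_abs_self ⟪d i, γ (p i) - γ (q i)⟫]
  have polygon := sum_dist_le_of_eVariationOn_le hL hu hus N
  simp only [dist_eq_norm] at polygon
  calc 2 * ∑ i ∈ s, ⟪d i, γ (p i) - γ (q i)⟫
      ≤ ∑ i ∈ s, ∑ k ∈ Finset.range N, |⟪d i, γ (u k) - γ (u (k + 1))⟫| := by
        rw [Finset.mul_sum]; exact Finset.sum_le_sum width
    _ = ∑ k ∈ Finset.range N, ∑ i ∈ s, |⟪d i, γ (u k) - γ (u (k + 1))⟫| := Finset.sum_comm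
    _ ≤ ∑ k ∈ Finset.range N, C * ‖γ (u k) - γ (u (k + 1))‖ :=
        Finset.sum_le_sum fun k _ ↦ hC _
    _ ≤ C * L := by rw [← Finset.mul_sum]; gcongr

open Complex ComplexConjugate

noncomputable def ω : ℂ := ⟨√3 / 2, 1 / 2⟩

@[simp] theorem ω_re : ω.re = √3 / 2 := rfl

@[simp] theorem ω_im : ω.im = 1 / 2 := rfl

theorem sqrt_three_sq : √3 ^ 2 = 3 := Real.sq_sqrt (by norm_num)

theorem ω_sq : ω ^ 2 = ⟨1 / 2, √3 / 2⟩ := by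
  apply Complex.ext <;> simp only [sq, mul_re, mul_im, ω_re, ω_im]
  · linear_combination (1 / 4 : ℝ) * sqrt_three_sq
  · ring

theorem ω_pow_three : ω ^ 3 = I := by
  rw [pow_succ, ω_sq]
  apply Complex.ext <;> simp only [mul_re, mul_im, ω_re, ω_im, I_re, I_im]
  · ring
  · linear_combination (1 / 4 : ℝ) * sqrt_three_sq

theorem ω_pow_twelve : ω ^ 12 = 1 := by
  rw [show 12 = 3 * 4 by rfl, pow_mul, ω_pow_three, I_pow_four]

theorem ω_pow_mod (n : ℕ) : ω ^ (n % 12) = ω ^ n := by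
  conv_rhs => rw [← Nat.mod_add_div n 12, pow_add, pow_mul, ω_pow_twelve, one_pow, mul_one]

theorem ω_pow_add_six (m : ℕ) : ω ^ (m + 6) = -ω ^ m := by
  rw [pow_add, show 6 = 3 * 2 by rfl, pow_mul, ω_pow_three, I_sq, mul_neg_one]

theorem inner_ω_pow_add_six (m : ℕ) (z : ℂ) : ⟪ω ^ (m + 6), z⟫ = -⟪ω ^ m, z⟫ := by
  rw [ω_pow_add_six, inner_neg_left]

theorem inner_mul_right_eq_inner_conj_mul (u c z : ℂ) : ⟪u, c * z⟫ = ⟪conj c * u, z⟫ := by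
  simp only [Complex.inner, map_mul, conj_conj]; ring_nf

theorem inner_ω_pow_I_pow_mul (k j : ℕ) (z : ℂ) : ⟪ω ^ k, I ^ j * z⟫ = ⟪ω ^ (k + 9 * j), z⟫ := by
  have : conj I = ω ^ 9 := by rw [conj_I, ← ω_pow_three, ← ω_pow_add_six]
  rw [inner_mul_right_eq_inner_conj_mul, map_pow, this, ← pow_mul, ← pow_add, add_comm]

theorem inner_ω (z : ℂ) : ⟪ω, z⟫ = (√3 * z.re + z.im) / 2 := by
  simp only [Complex.inner, mul_re, conj_re, conj_im, ω_re, ω_im]; ring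

theorem ω_pow_four : ω ^ 4 = ω ^ 2 - 1 := by
  rw [pow_succ, ω_pow_three, ω_sq]
  apply Complex.ext <;>
    simp only [mul_re, mul_im, sub_re, sub_im, one_re, one_im, I_re, I_im, ω_re, ω_im] <;> ring

theorem ω_pow_five : ω ^ 5 = I - ω := by
  rw [show 5 = 2 + 3 by rfl, pow_add, ω_pow_three, ω_sq]
  apply Complex.ext <;> simp only [mul_re, mul_im, sub_re, sub_im, I_re, I_im, ω_re, ω_im] <;> ring

theorem inner_ω_pow_five (z : ℂ) : ⟪ω ^ 5, z⟫ = (-√3 * z.re + z.im) / 2 := by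
  rw [ω_pow_five, inner_sub_left, inner_ω]
  simp only [Complex.inner, mul_re, conj_re, conj_im, I_re, I_im]
  ring

theorem inner_ω_pow_nine (z : ℂ) : ⟪ω ^ 9, z⟫ = -z.im := by
  rw [show 9 = 3 + 6 by rfl, inner_ω_pow_add_six, ω_pow_three]; simp [Complex.inner]

theorem β_pos : 0 < β :=
  Real.cos_pos_of_mem_Ioo ⟨by linarith [Real.pi_pos], by linarith [Real.pi_pos]⟩

theorem sixteen_mul_β_sq : 16 * β ^ 2 = 8 + 4 * √3 := by
  rw [β, Real.cos_sq, show 2 * (Real.pi / 12) = Real.pi / 6 by ring, Real.cos_pi_div_six]; ring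

/-- The two coordinates of `∑_{m<6} eₘ ωᵐ` (with `s = √3`); all 64 sign patterns are checked. -/
theorem sq_add_sq_le_of_signs (s e₀ e₁ e₂ e₃ e₄ e₅ : ℝ) (hs : s ^ 2 = 3) (hs₀ : 0 ≤ s)
    (h₀ : e₀ = 1 ∨ e₀ = -1) (h₁ : e₁ = 1 ∨ e₁ = -1) (h₂ : e₂ = 1 ∨ e₂ = -1)
    (h₃ : e₃ = 1 ∨ e₃ = -1) (h₄ : e₄ = 1 ∨ e₄ = -1) (h₅ : e₅ = 1 ∨ e₅ = -1) :
    (e₀ - e₄ + ((e₁ - e₅) * s + e₂ + e₄) / 2) ^ 2 + (e₃ + e₅ + (e₁ - e₅ + (e₂ + e₄) * s) / 2) ^ 2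
      ≤ 8 + 4 * s := by
  rcases h₀ with rfl | rfl <;> rcases h₁ with rfl | rfl <;> rcases h₂ with rfl | rfl <;>
    rcases h₃ with rfl | rfl <;> rcases h₄ with rfl | rfl <;> rcases h₅ with rfl | rfl <;>
    (ring_nf; linarith)

theorem norm_sum_sign_smul_ω_pow_le (ε : ℕ → ℝ) (hε : ∀ m, ε m = 1 ∨ ε m = -1) :
    ‖∑ m ∈ Finset.range 6, ε m • ω ^ m‖ ≤ 4 * β := by
  rw [← pow_le_pow_iff_left₀ (norm_nonneg _) (by linarith [β_pos]) two_ne_zero, mul_pow,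
    show (4 : ℝ) ^ 2 * β ^ 2 = 16 * β ^ 2 by ring, sixteen_mul_β_sq, Complex.sq_norm, normSq_apply]
  simp only [Finset.sum_range_succ, Finset.sum_range_zero, zero_add, pow_zero, pow_one,
    ω_pow_three, ω_pow_four, ω_pow_five, ω_sq, add_re, add_im, smul_re, smul_im, sub_re, sub_im,
    one_re, one_im, I_re, I_im, ω_re, ω_im, smul_eq_mul]
  linarith [sq_add_sq_le_of_signs √3 _ _ _ _ _ _ sqrt_three_sq (Real.sqrt_nonneg 3) (hε 0) (hε 1)
    (hε 2) (hε 3) (hε 4) (hε 5)]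

theorem sum_abs_inner_ω_pow_le (z : ℂ) :
    ∑ m ∈ Finset.range 6, |⟪ω ^ m, z⟫| ≤ 4 * β * ‖z‖ := by
  have hsign (x : ℝ) : ∃ e : ℝ, (e = 1 ∨ e = -1) ∧ |x| = e * x := by
    rcases abs_choice x with h | h
    exacts [⟨1, .inl rfl, by rw [h, one_mul]⟩, ⟨-1, .inr rfl, by rw [h, neg_one_mul]⟩]
  choose ε hε habs using fun m ↦ hsign ⟪ω ^ m, z⟫
  calc ∑ m ∈ Finset.range 6, |⟪ω ^ m, z⟫| = ⟪∑ m ∈ Finset.range 6, ε m • ω ^ m, z⟫ := by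
        simp only [habs, sum_inner, real_inner_smul_left]
    _ ≤ ‖∑ m ∈ Finset.range 6, ε m • ω ^ m‖ * ‖z‖ := real_inner_le_norm _ _
    _ ≤ 4 * β * ‖z‖ := by gcongr; exact norm_sum_sign_smul_ω_pow_le ε hε

theorem sum_inner_ω_pow_le_of_eVariationOn_le {γ : ℝ → ℂ} {a b : ℝ} (hab : a ≤ b)
    (hγ : γ a = γ b) {L : ℝ≥0} (hL : eVariationOn γ (Icc a b) ≤ L) {T : ℕ → ℝ}
    (hT : ∀ m, T m ∈ Icc a b) :
    ∑ m ∈ Finset.range 12, ⟪ω ^ m, γ (T m)⟫ ≤ 2 * β * L := by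
  have pairs : ∑ m ∈ Finset.range 12, ⟪ω ^ m, γ (T m)⟫ =
      ∑ m ∈ Finset.range 6, ⟪ω ^ m, γ (T m) - γ (T (m + 6))⟫ := by
    rw [show 12 = 6 + 6 by rfl, Finset.sum_range_add, ← Finset.sum_add_distrib]
    refine Finset.sum_congr rfl fun m _ ↦ ?_
    rw [inner_sub_right, add_comm 6 m, inner_ω_pow_add_six, sub_eq_add_neg]
  have := two_mul_sum_inner_sub_le_of_eVariationOn_le hab hγ hL (Finset.range 6) (ω ^ ·)
    (by linarith [β_pos]) sum_abs_inner_ω_pow_le (fun m _ ↦ hT m) (fun m _ ↦ hT (m + 6))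
  linarith

theorem mem_Δβ_of_le {z : ℂ} (h₀ : 0 ≤ z.im) (h₁ : √3 * z.re + z.im ≤ β)
    (h₂ : -√3 * z.re + z.im ≤ β) : z ∈ Δβ := by
  have hβ := β_pos
  have hs : 0 < √3 := by positivity
  set w : Fin 3 → ℝ :=
    ![(β - z.im - √3 * z.re) / (2 * β), (β - z.im + √3 * z.re) / (2 * β), z.im / β]
  set V : Fin 3 → ℂ := ![((-(β / √3) : ℝ) : ℂ), ((β / √3 : ℝ) : ℂ), (β : ℂ) * I]
  have hw : ∀ i ∈ Finset.univ, 0 ≤ w i := by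
    intro i _; fin_cases i <;> exact div_nonneg (by linarith) (by linarith)
  have hw₁ : ∑ i, w i = 1 := by
    simp only [w, Fin.sum_univ_three, Matrix.cons_val_zero, Matrix.cons_val_one,
      Matrix.cons_val_two, Matrix.head_cons, Matrix.tail_cons]
    field_simp; ring
  have hV : ∀ i ∈ Finset.univ, V i ∈ Δβ :=
    fun i _ ↦ subset_convexHull ℝ _ (by fin_cases i <;> simp [V])
  have hz : z = ∑ i, w i • V i := by
    apply Complex.ext <;>
      simp only [w, V, Fin.sum_univ_three, Matrix.cons_val_zero, Matrix.cons_val_one,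
        Matrix.cons_val_two, Matrix.head_cons, Matrix.tail_cons, add_re, add_im, smul_re,
        smul_im, ofReal_re, ofReal_im, mul_re, mul_im, I_re, I_im, smul_eq_mul] <;>
      field_simp <;> ring
  rw [hz]
  exact (convex_convexHull ℝ _).sum_mem hw hw₁ hV

/-- `ω`, `ω⁵` and `ω⁹` are the outward unit normals of `Δβ`, whose support values in these
directions are `β / 2`, `β / 2` and `0`. -/
theorem exists_add_image_subset_Δβ {α : Type*} {δ : α → ℂ} {S : Set α} {h : ℕ → ℝ}
    (hδ : ∀ t ∈ S, ∀ l < 3, ⟪ω ^ (4 * l + 1), δ t⟫ ≤ h l) (hsum : ∑ l ∈ Finset.range 3, h l ≤ β) :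
    ∃ v : ℂ, (fun t ↦ δ t + v) '' S ⊆ Δβ := by
  have hs : √3 ≠ 0 := by positivity
  simp only [Finset.sum_range_succ, Finset.sum_range_zero, zero_add] at hsum
  refine ⟨⟨(h 1 - h 0) / √3, h 2⟩, image_subset_iff.2 fun t ht ↦ ?_⟩
  have h₀ : ⟪ω ^ 1, δ t⟫ ≤ h 0 := hδ t ht 0 (by norm_num)
  have h₁ : ⟪ω ^ 5, δ t⟫ ≤ h 1 := hδ t ht 1 (by norm_num)
  have h₂ : ⟪ω ^ 9, δ t⟫ ≤ h 2 := hδ t ht 2 (by norm_num)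
  rw [pow_one, inner_ω] at h₀
  rw [inner_ω_pow_five] at h₁
  rw [inner_ω_pow_nine] at h₂
  apply mem_Δβ_of_le <;>
    simp only [Complex.add_re, Complex.add_im, mul_add, neg_mul, mul_div_cancel₀ _ hs] <;>
    linarith

/-- As `(l, j)` runs over `range 3 × Fin 4`, `(4 * l + 1 + 9 * j) % 12` runs once over `range 12`;
these are the exponents of the outward normals of `Δβ` rotated by `i⁻ʲ`. -/
theorem exists_sum_range_three_le_of_sum_range_twelve_le {H : ℕ → ℝ} {c : ℝ}
    (h : ∑ m ∈ Finset.range 12, H m ≤ 4 * c) :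
    ∃ j : Fin 4, ∑ l ∈ Finset.range 3, H ((4 * l + 1 + 9 * j) % 12) ≤ c := by
  have hsplit : ∑ m ∈ Finset.range 12, H m =
      ∑ j : Fin 4, ∑ l ∈ Finset.range 3, H ((4 * l + 1 + 9 * j) % 12) := by
    simp only [Fin.sum_univ_four, Finset.sum_range_succ, Finset.sum_range_zero, Fin.isValue,
      Fin.coe_ofNat_eq_mod, Nat.reduceMul, Nat.reduceAdd, Nat.reduceMod, Nat.zero_mod]
    ring
  by_contra! hlt
  have := Finset.sum_lt_sum_of_nonempty Finset.univ_nonempty fun j _ ↦ hlt j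
  simp only [Finset.sum_const, Finset.card_univ, Fintype.card_fin, nsmul_eq_mul, Nat.cast_ofNat,
    ← hsplit] at this
  linarith

/-- Δ_β is a convex G₄-covering of all closed curves of length 2. -/
theorem triangle_beta_G4_covering (γ : ℝ → ℂ) (hγ : IsClosedCurve2 γ) :
    ∃ j : Fin 4, ∃ v : ℂ,
      (fun t => Complex.I ^ (j : ℕ) * γ t + v) '' Set.Icc 0 1 ⊆ Δβ := by
  obtain ⟨hcont, hclosed, hvar⟩ := hγ
  have hmax (m : ℕ) : ∃ T ∈ Icc (0 : ℝ) 1, ∀ t ∈ Icc (0 : ℝ) 1,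
      ⟪ω ^ m, γ t⟫ ≤ ⟪ω ^ m, γ T⟫ :=
    isCompact_Icc.exists_isMaxOn (nonempty_Icc.2 zero_le_one)
      (continuousOn_const.inner (𝕜 := ℝ) hcont)
  choose T hT hTmax using hmax
  have hsum := sum_inner_ω_pow_le_of_eVariationOn_le zero_le_one hclosed (L := 2)
    (by rw [hvar]; rfl) hT
  obtain ⟨j, hj⟩ := exists_sum_range_three_le_of_sum_range_twelve_le
    (H := fun m ↦ ⟪ω ^ m, γ (T m)⟫) (c := β) (by push_cast at hsum; linarith)
  obtain ⟨v, hv⟩ := exists_add_image_subset_Δβ (δ := fun t ↦ I ^ (j : ℕ) * γ t)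
    (fun t ht l _ ↦ by rw [inner_ω_pow_I_pow_mul, ← ω_pow_mod]; exact hTmax _ t ht) hj
  exact ⟨j, v, hv⟩
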